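/- arXiv:2006.10869 — 2 statements merged into one kernel-verified Lean document; each statement's English description precedes it below -/
import Mathlib

section
/- Let f : ℝ^q → ℝ^p be continuously differentiable, A : ℝ^p → ℝ^q a linear map, Y ⊆ ℝ^q, and define Λ_{f∘a} = sup over y in the convex hull of Y of ‖J(y)∘A‖₂ and Λ_f = sup over y in the convex hull of Y of ‖J(y)‖₂, where J(y) is the Fréchet derivative of f at y. Suppose y₁ = A x₁ + n₁ ∈ Y and y₂ = A x₂ + n₂ ∈ Y with ‖n₁‖₂ ≤ η and ‖n₂‖₂ ≤ η, and define the loss l(f, (x, y)) = ‖f(y) − x‖₂. Then |l(f, (x₂, y₂)) − l(f, (x₁, y₁))| ≤ (1 + Λ_{f∘a}) · ‖x₂ − x₁‖₂ + 2η · Λ_f. -/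
/-!
The reconstruction errors differ by at most ‖f y₂ - f y₁‖ + ‖x₂ - x₁‖. The mean value theorem on the
segment [y₁, y₂], which lies in the convex hull of `Y`, bounds ‖f y₂ - f y₁‖ by the supremum of
‖J(z) (y₂ - y₁)‖ over that hull, and writing y₂ - y₁ = A (x₂ - x₁) + (n₂ - n₁) splits this into
Λfa ‖x₂ - x₁‖ + Λf ‖n₂ - n₁‖ ≤ Λfa ‖x₂ - x₁‖ + 2 η Λf.
-/

open Set

theorem le_biSup_of_bddAbove_image {α β : Type*} [ConditionallyCompleteLattice α] {g : β → α}
    {s : Set β} (H : BddAbove (g '' s)) {c : β} (hc : c ∈ s) : g c ≤ ⨆ y ∈ s, g y :=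
  le_ciSup₂ (f := fun y (_ : y ∈ s) => g y) (by convert H using 1; ext; simp [eq_comm]) c hc

theorem norm_sub_le_of_norm_fderiv_apply_le {E F : Type*} [NormedAddCommGroup E]
    [NormedSpace ℝ E] [NormedAddCommGroup F] [NormedSpace ℝ F] {f : E → F} {a b : E} {C : ℝ}
    (hf : ∀ z ∈ segment ℝ a b, DifferentiableAt ℝ f z)
    (bound : ∀ z ∈ segment ℝ a b, ‖fderiv ℝ f z (b - a)‖ ≤ C) : ‖f b - f a‖ ≤ C := by
  set g := (AffineMap.lineMap a b : ℝ → E)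
  have segm : MapsTo g (Icc 0 1) (segment ℝ a b) := by
    rw [segment_eq_image_lineMap]; exact mapsTo_image _ _
  have hD : ∀ t ∈ Icc (0 : ℝ) 1,
      HasDerivWithinAt (f ∘ g) (fderiv ℝ f (g t) (b - a)) (Icc 0 1) t := fun t ht => by
    simpa using (hf (g t) (segm ht)).hasFDerivAt.comp_hasDerivWithinAt t
      AffineMap.hasDerivWithinAt_lineMap
  simpa [g] using norm_image_sub_le_of_norm_deriv_le_segment_01' hD
    fun t ht => bound _ (segm (Ico_subset_Icc_self ht))

theorem ContinuousLinearMap.norm_apply_map_add_le {E F G : Type*} [SeminormedAddCommGroup E]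
    [SeminormedAddCommGroup F] [SeminormedAddCommGroup G] [NormedSpace ℝ E] [NormedSpace ℝ F]
    [NormedSpace ℝ G] (L : F →L[ℝ] G) (A : E →L[ℝ] F) (u : E) (w : F) :
    ‖L (A u + w)‖ ≤ ‖L.comp A‖ * ‖u‖ + ‖L‖ * ‖w‖ := by
  rw [map_add, ← L.comp_apply A]
  exact (norm_add_le _ _).trans (add_le_add ((L.comp A).le_opNorm u) (L.le_opNorm w))

theorem abs_norm_sub_sub_norm_sub_le {E : Type*} [SeminormedAddCommGroup E] (a b x y : E) :
    |‖a - x‖ - ‖b - y‖| ≤ ‖a - b‖ + ‖x - y‖ :=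
  calc |‖a - x‖ - ‖b - y‖| ≤ ‖(a - x) - (b - y)‖ := abs_norm_sub_norm_le _ _
    _ = ‖(a - b) - (x - y)‖ := by congr 1; abel
    _ ≤ ‖a - b‖ + ‖x - y‖ := norm_sub_le _ _

/-- With `Λfa` and `Λf` the suprema over the convex hull of `Y` of `‖J(y)∘A‖`
and `‖J(y)‖`, and samples `(x₁, y₁)`, `(x₂, y₂)` with `yᵢ = A xᵢ + nᵢ ∈ Y`, `‖nᵢ‖ ≤ η`,
the losses `l(f,(x,y)) = ‖f(y) − x‖` satisfy
`|l(f,s₂) − l(f,s₁)| ≤ (1 + Λfa) ‖x₂ − x₁‖ + 2 η Λf`. -/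
theorem loss_difference_bound {p q : ℕ}
    (f : EuclideanSpace ℝ (Fin q) → EuclideanSpace ℝ (Fin p))
    (hf : ContDiff ℝ 1 f)
    (A : EuclideanSpace ℝ (Fin p) →L[ℝ] EuclideanSpace ℝ (Fin q))
    (Y : Set (EuclideanSpace ℝ (Fin q))) (η : ℝ)
    (Λfa Λf : ℝ)
    (hbda : BddAbove ((fun y => ‖(fderiv ℝ f y).comp A‖) '' convexHull ℝ Y))
    (hbdf : BddAbove ((fun y => ‖fderiv ℝ f y‖) '' convexHull ℝ Y))
    (hΛfa : Λfa = ⨆ y ∈ convexHull ℝ Y, ‖(fderiv ℝ f y).comp A‖)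
    (hΛf : Λf = ⨆ y ∈ convexHull ℝ Y, ‖fderiv ℝ f y‖)
    (x₁ x₂ : EuclideanSpace ℝ (Fin p)) (n₁ n₂ : EuclideanSpace ℝ (Fin q))
    (hn₁ : ‖n₁‖ ≤ η) (hn₂ : ‖n₂‖ ≤ η)
    (hy₁ : A x₁ + n₁ ∈ Y) (hy₂ : A x₂ + n₂ ∈ Y) :
    |‖f (A x₂ + n₂) - x₂‖ - ‖f (A x₁ + n₁) - x₁‖| ≤
      (1 + Λfa) * ‖x₂ - x₁‖ + 2 * η * Λf := by
  have hΛfa_ge {z} (hz : z ∈ convexHull ℝ Y) : ‖(fderiv ℝ f z).comp A‖ ≤ Λfa :=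
    hΛfa ▸ le_biSup_of_bddAbove_image hbda hz
  have hΛf_ge {z} (hz : z ∈ convexHull ℝ Y) : ‖fderiv ℝ f z‖ ≤ Λf :=
    hΛf ▸ le_biSup_of_bddAbove_image hbdf hz
  have hΛf_nonneg : 0 ≤ Λf := (norm_nonneg _).trans (hΛf_ge (subset_convexHull ℝ Y hy₁))
  have hnoise : ‖n₂ - n₁‖ ≤ 2 * η := by linarith [norm_sub_le n₂ n₁]
  have hsegment : segment ℝ (A x₁ + n₁) (A x₂ + n₂) ⊆ convexHull ℝ Y :=
    (convex_convexHull ℝ Y).segment_subset (subset_convexHull ℝ Y hy₁) (subset_convexHull ℝ Y hy₂)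
  have hdiff : A x₂ + n₂ - (A x₁ + n₁) = A (x₂ - x₁) + (n₂ - n₁) := by rw [map_sub]; abel
  have hJ : ∀ z ∈ segment ℝ (A x₁ + n₁) (A x₂ + n₂),
      ‖fderiv ℝ f z (A x₂ + n₂ - (A x₁ + n₁))‖ ≤ Λfa * ‖x₂ - x₁‖ + 2 * η * Λf := fun z hz =>
    calc ‖fderiv ℝ f z (A x₂ + n₂ - (A x₁ + n₁))‖
        ≤ ‖(fderiv ℝ f z).comp A‖ * ‖x₂ - x₁‖ + ‖fderiv ℝ f z‖ * ‖n₂ - n₁‖ :=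
          hdiff ▸ (fderiv ℝ f z).norm_apply_map_add_le A _ _
      _ ≤ Λfa * ‖x₂ - x₁‖ + Λf * (2 * η) := by
          gcongr
          exacts [hΛfa_ge (hsegment hz), hΛf_ge (hsegment hz)]
      _ = Λfa * ‖x₂ - x₁‖ + 2 * η * Λf := by ring
  have hdf : Differentiable ℝ f := hf.differentiable one_ne_zero
  calc |‖f (A x₂ + n₂) - x₂‖ - ‖f (A x₁ + n₁) - x₁‖|
      ≤ ‖f (A x₂ + n₂) - f (A x₁ + n₁)‖ + ‖x₂ - x₁‖ := abs_norm_sub_sub_norm_sub_le _ _ _ _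
    _ ≤ Λfa * ‖x₂ - x₁‖ + 2 * η * Λf + ‖x₂ - x₁‖ := by
        gcongr
        exact norm_sub_le_of_norm_fderiv_apply_le (fun z _ => hdf z) hJ
    _ = (1 + Λfa) * ‖x₂ - x₁‖ + 2 * η * Λf := by ring
end

section
/- Let X ⊆ ℝ^p and Y ⊆ ℝ^q be compact, let A : ℝ^p → ℝ^q be a linear map, η ≥ 0, and let the sample space D = {(x, A x + n) : x ∈ X, ‖n‖₂ ≤ η, A x + n ∈ Y} be equipped with the sum product metric ρ((x,y),(x',y')) = ‖x−x'‖₂ + ‖y−y'‖₂. Let μ be a Borel probability measure on D, and let S = (s₁, …, s_m) be drawn i.i.d. from μ. Let F : D^m → (ℝ^q → ℝ^p) be a learning algorithm producing for each training set S a continuously differentiable map f_S = F(S), and suppose there exist finite constants Λ₁, Λ₂, M such that for every S: (i) sup over y in the convex hull of Y of ‖J_{f_S}(y)∘A‖₂ ≤ Λ₁ and sup over y in the convex hull of Y of ‖J_{f_S}(y)‖₂ ≤ Λ₂, where J_{f_S}(y) is the Fréchet derivative of f_S at y; (ii) sup over s = (x,y) ∈ D of ‖f_S(y) − x‖₂ ≤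 M; and (iii) the functions S ↦ E_{s∼μ}[‖f_S(y) − x‖₂] and (S, s) ↦ ‖f_S(y) − x‖₂ are measurable. Fix δ > 0 and let N be a finite number such that X admits a (δ/2)-cover of cardinality N with respect to the Euclidean metric. Then for any ζ > 0, with probability at least 1 − ζ over the draw of S from μ^m, the generalization error GE(f_S) = |E_{s∼μ}[l(f_S, s)] − (1/m)·Σ_{i=1}^m l(f_S, s_i)|, where l(f, (x,y)) = ‖f(y) − x‖₂, satisfies GE(f_S) ≤ (1 + Λ₁)·δ + 2η·Λ₂ + M·√((2·N·log(2) + 2·log(1/ζ))/m). -/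
/-!
Along the segment between two measurements `A x + n` and `A x' + n'` (which stays in the convex
hull of `Y`), the mean value inequality bounds the change of the loss `‖f y - x‖` by
`(1 + Λ₁) ‖x - x'‖ + 2 η Λ₂`. Partition the sample space into measurable cells subordinate to the
`δ/2`-cover; on each cell the loss oscillates by at most `(1 + Λ₁) δ + 2 η Λ₂`, so the true and
empirical risks differ by at most this oscillation plus `M` times the `ℓ¹` distance between the
cell probabilities and the empirical cell frequencies. The cells do not depend on the training set,
so Hoeffding's inequality and a union bound over the `2 ^ N` unions of cells
(Bretagnolle–Huber–Carol) make that distance at most `√((2 N log 2 + 2 log (1/ζ)) / m)` with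
probability at least `1 - ζ`, simultaneously for every learnt hypothesis.
-/

open MeasureTheory ProbabilityTheory Function
open scoped ENNReal

section MeanValue

variable {E F G : Type*} [NormedAddCommGroup E] [NormedSpace ℝ E] [NormedAddCommGroup F]
  [NormedSpace ℝ F] [NormedAddCommGroup G] [NormedSpace ℝ G]

theorem norm_image_sub_le_of_fderiv_comp_le (A : E →L[ℝ] F) {f : F → G}
    (hf : Differentiable ℝ f) {K : Set F} (hK : Convex ℝ K) {Λ₁ Λ₂ : ℝ}
    (hΛ₁ : ∀ z ∈ K, ‖(fderiv ℝ f z).comp A‖ ≤ Λ₁) (hΛ₂ : ∀ z ∈ K, ‖fderiv ℝ f z‖ ≤ Λ₂)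
    {y y' : F} (hy : y ∈ K) (hy' : y' ∈ K) {u : E} {w : F} (huw : y' - y = A u + w) :
    ‖f y' - f y‖ ≤ Λ₁ * ‖u‖ + Λ₂ * ‖w‖ := by
  have hderiv : ∀ t ∈ Set.Icc (0 : ℝ) 1, HasDerivWithinAt (fun t : ℝ => f (y + t • (y' - y)))
      (fderiv ℝ f (y + t • (y' - y)) (y' - y)) (Set.Icc 0 1) t := by
    intro t _
    have hline : HasDerivAt (fun t : ℝ => y + t • (y' - y)) (y' - y) t := by
      simpa using ((hasDerivAt_id t).smul_const (y' - y)).const_add y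
    exact ((hf _).hasFDerivAt.comp_hasDerivAt t hline).hasDerivWithinAt
  have hbound : ∀ t ∈ Set.Ico (0 : ℝ) 1,
      ‖fderiv ℝ f (y + t • (y' - y)) (y' - y)‖ ≤ Λ₁ * ‖u‖ + Λ₂ * ‖w‖ := by
    intro t ht
    have hz := hK.add_smul_sub_mem hy hy' (Set.Ico_subset_Icc_self ht)
    have hsplit : fderiv ℝ f (y + t • (y' - y)) (y' - y) =
        (fderiv ℝ f (y + t • (y' - y))).comp A u + fderiv ℝ f (y + t • (y' - y)) w := by
      rw [huw, map_add]; rfl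
    rw [hsplit]
    refine (norm_add_le _ _).trans (add_le_add ?_ ?_)
    · exact (ContinuousLinearMap.le_opNorm _ _).trans (by gcongr; exact hΛ₁ _ hz)
    · exact (ContinuousLinearMap.le_opNorm _ _).trans (by gcongr; exact hΛ₂ _ hz)
  simpa using norm_image_sub_le_of_norm_deriv_le_segment_01' hderiv hbound

end MeanValue

theorem exists_measurable_partition_subordinate {α ι : Type*} [MeasurableSpace α] [Finite ι]
    {D : Set α} (hD : MeasurableSet D) {B : ι → Set α} (hB : ∀ j, MeasurableSet (B j))
    (hDB : D ⊆ ⋃ j, B j) :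
    ∃ U : ι → Set α, (∀ j, MeasurableSet (U j)) ∧ Pairwise (Disjoint on U) ∧
      (⋃ j, U j) = D ∧ ∀ j, U j ⊆ B j := by
  obtain ⟨n, ⟨e⟩⟩ := Finite.exists_equiv_fin ι
  set B' : Fin n → Set α := B ∘ e.symm
  refine ⟨fun j => D ∩ disjointed B' (e j), fun j => hD.inter ?_, fun i j hij => ?_, ?_,
    fun j => Set.inter_subset_right.trans ?_⟩
  · exact disjointedRec (fun _ k ht => ht.diff (hB _)) (hB _)
  · exact ((disjoint_disjointed B' (e.injective.ne hij)).inf_left' D).inf_right' D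
  · rw [← Set.inter_iUnion, e.surjective.iUnion_comp (disjointed B'), iUnion_disjointed,
      Set.inter_eq_left]
    exact hDB.trans_eq (e.symm.surjective.iUnion_comp B).symm
  · simpa [B'] using disjointed_subset B' (e j)

section MeasurementModel

variable {E F : Type*} [NormedAddCommGroup E] [NormedSpace ℝ E] [NormedAddCommGroup F]
  [NormedSpace ℝ F]

def measurementSet (X : Set E) (Y : Set F) (A : E →L[ℝ] F) (η : ℝ) : Set (E × F) :=
  {s | ∃ x ∈ X, ∃ n : F, ‖n‖ ≤ η ∧ A x + n ∈ Y ∧ s = (x, A x + n)}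

theorem isCompact_measurementSet [ProperSpace F] {X : Set E} {Y : Set F} (hX : IsCompact X)
    (hY : IsCompact Y) (A : E →L[ℝ] F) (η : ℝ) : IsCompact (measurementSet X Y A η) := by
  have hK : IsCompact (X ×ˢ Metric.closedBall (0 : F) η ∩ (fun z : E × F => A z.1 + z.2) ⁻¹' Y) :=
    (hX.prod (isCompact_closedBall _ _)).inter_right (hY.isClosed.preimage (by fun_prop))
  convert hK.image (f := fun z : E × F => (z.1, A z.1 + z.2)) (by fun_prop) using 1
  ext s
  constructor
  · rintro ⟨x, hx, n, hn, hy, rfl⟩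
    exact ⟨(x, n), ⟨⟨hx, by simpa using hn⟩, hy⟩, rfl⟩
  · rintro ⟨⟨x, n⟩, ⟨⟨hx, hn⟩, hy⟩, rfl⟩
    exact ⟨x, hx, n, by simpa using hn, hy, rfl⟩

theorem abs_norm_sub_sub_norm_sub_le_of_mem_measurementSet {X : Set E} {Y : Set F}
    {A : E →L[ℝ] F} {η : ℝ} {f : F → E} (hf : Differentiable ℝ f) {Λ₁ Λ₂ : ℝ}
    (hΛ₁ : ∀ z ∈ convexHull ℝ Y, ‖(fderiv ℝ f z).comp A‖ ≤ Λ₁)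
    (hΛ₂ : ∀ z ∈ convexHull ℝ Y, ‖fderiv ℝ f z‖ ≤ Λ₂) {s s' : E × F}
    (hs : s ∈ measurementSet X Y A η) (hs' : s' ∈ measurementSet X Y A η) {δ : ℝ}
    (hδ : ‖s'.1 - s.1‖ ≤ δ) :
    |‖f s'.2 - s'.1‖ - ‖f s.2 - s.1‖| ≤ (1 + Λ₁) * δ + 2 * η * Λ₂ := by
  obtain ⟨x, -, n, hn, hy, rfl⟩ := hs
  obtain ⟨x', -, n', hn', hy', rfl⟩ := hs'
  have hΛ₁0 : 0 ≤ Λ₁ := (norm_nonneg _).trans (hΛ₁ _ (subset_convexHull ℝ Y hy))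
  have hΛ₂0 : 0 ≤ Λ₂ := (norm_nonneg _).trans (hΛ₂ _ (subset_convexHull ℝ Y hy))
  have hf_sub : ‖f (A x' + n') - f (A x + n)‖ ≤ Λ₁ * ‖x' - x‖ + Λ₂ * ‖n' - n‖ :=
    norm_image_sub_le_of_fderiv_comp_le A hf (convex_convexHull ℝ Y) hΛ₁ hΛ₂
      (subset_convexHull ℝ Y hy) (subset_convexHull ℝ Y hy') (by rw [map_sub]; abel)
  have hnoise : ‖n' - n‖ ≤ 2 * η := (norm_sub_le _ _).trans (by linarith)
  calc |‖f (A x' + n') - x'‖ - ‖f (A x + n) - x‖|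
      ≤ ‖(f (A x' + n') - f (A x + n)) - (x' - x)‖ := by
        simpa only [sub_sub_sub_cancel_right, sub_sub_sub_comm] using abs_norm_sub_norm_le _ _
    _ ≤ ‖f (A x' + n') - f (A x + n)‖ + ‖x' - x‖ := norm_sub_le _ _
    _ ≤ (1 + Λ₁) * δ + 2 * η * Λ₂ := by
        simp only at hδ
        nlinarith [norm_nonneg (x' - x)]

theorem exists_partition_measurementSet [ProperSpace F] [MeasurableSpace (E × F)]
    [OpensMeasurableSpace (E × F)] {X : Set E} {Y : Set F} (hX : IsCompact X) (hY : IsCompact Y)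
    (A : E →L[ℝ] F) (η : ℝ) {δ : ℝ} {C : Finset E} (hC : ∀ x ∈ X, ∃ c ∈ C, ‖x - c‖ ≤ δ / 2) :
    ∃ U : C → Set (E × F), (∀ c, MeasurableSet (U c)) ∧ Pairwise (Disjoint on U) ∧
      (⋃ c, U c) = measurementSet X Y A η ∧ ∀ c, ∀ s ∈ U c, ∀ s' ∈ U c, ‖s.1 - s'.1‖ ≤ δ := by
  obtain ⟨U, hU, hdisj, hUD, hUB⟩ := exists_measurable_partition_subordinate
    (isCompact_measurementSet hX hY A η).isClosed.measurableSet
    (B := fun c : C => {s | ‖s.1 - c‖ ≤ δ / 2})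
    (fun c => (isClosed_le (by fun_prop) (by fun_prop)).measurableSet)
    fun s ⟨x, hx, _, _, _, hs⟩ => by
      obtain ⟨c, hc, hxc⟩ := hC x hx
      exact Set.mem_iUnion.2 ⟨⟨c, hc⟩, by simpa [hs] using hxc⟩
  refine ⟨U, hU, hdisj, hUD, fun c s hs s' hs' => ?_⟩
  calc ‖s.1 - s'.1‖ ≤ ‖s.1 - c‖ + ‖c - s'.1‖ := norm_sub_le_norm_sub_add_norm_sub _ _ _
    _ ≤ δ / 2 + δ / 2 := add_le_add (hUB c hs) (norm_sub_rev (c : E) _ ▸ hUB c hs')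
    _ = δ := add_halves δ

end MeasurementModel

section Empirical

variable {α : Type*} [MeasurableSpace α] {m : ℕ}

noncomputable def empiricalMeasure (S : Fin m → α) : Measure α :=
  (m : ℝ≥0∞)⁻¹ • ∑ i, Measure.dirac (S i)

theorem empiricalMeasure_apply (S : Fin m → α) {U : Set α} (hU : MeasurableSet U) :
    empiricalMeasure S U = (m : ℝ≥0∞)⁻¹ * ∑ i, U.indicator 1 (S i) := by
  simp [empiricalMeasure, Measure.dirac_apply' _ hU]

theorem measureReal_empiricalMeasure (S : Fin m → α) {U : Set α} (hU : MeasurableSet U) :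
    (empiricalMeasure S).real U = (∑ i, U.indicator (1 : α → ℝ) (S i)) / m := by
  rw [measureReal_def, empiricalMeasure_apply S hU, ENNReal.toReal_mul, ENNReal.toReal_inv,
    ENNReal.toReal_natCast, ENNReal.toReal_sum fun i _ => by by_cases h : S i ∈ U <;> simp [h],
    inv_mul_eq_div]
  congr 1
  refine Finset.sum_congr rfl fun i _ => ?_
  by_cases h : S i ∈ U <;> simp [h]

theorem integral_empiricalMeasure [MeasurableSingletonClass α] {E : Type*} [NormedAddCommGroup E]
    [NormedSpace ℝ E] [CompleteSpace E] (S : Fin m → α) (f : α → E) :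
    ∫ s, f s ∂empiricalMeasure S = (m : ℝ)⁻¹ • ∑ i, f (S i) := by
  rw [empiricalMeasure, integral_smul_measure, integral_finsetSum_measure
    fun i _ => integrable_dirac enorm_lt_top]
  simp [integral_dirac]

variable [NeZero m]

instance (S : Fin m → α) : IsProbabilityMeasure (empiricalMeasure S) := by
  constructor
  rw [empiricalMeasure_apply S MeasurableSet.univ]
  simp [ENNReal.inv_mul_cancel (NeZero.ne (m : ℝ≥0∞)) (ENNReal.natCast_ne_top m)]

theorem empiricalMeasure_eq_one {S : Fin m → α} {W : Set α} (hW : MeasurableSet W)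
    (hS : ∀ i, S i ∈ W) : empiricalMeasure S W = 1 := by
  rw [empiricalMeasure_apply S hW]
  simp [hS, ENNReal.inv_mul_cancel (NeZero.ne (m : ℝ≥0∞)) (ENNReal.natCast_ne_top m)]

theorem measureReal_empiricalMeasure_ge_le (μ : Measure α) [IsProbabilityMeasure μ] {U : Set α}
    (hU : MeasurableSet U) {t : ℝ} (ht : 0 ≤ t) :
    (Measure.pi fun _ : Fin m => μ).real {S | μ.real U + t ≤ (empiricalMeasure S).real U} ≤
      Real.exp (-2 * m * t ^ 2) := by
  set Y : α → ℝ := U.indicator 1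
  have hY : Measurable Y := measurable_one.indicator hU
  have hindep : iIndepFun (fun i (S : Fin m → α) => Y (S i) - μ.real U)
      (Measure.pi fun _ => μ) :=
    (iIndepFun_pi (X := fun _ => Y) fun _ => hY.aemeasurable).comp (fun _ x => x - μ.real U)
      fun _ => measurable_id.sub_const _
  have hsubG : ∀ i, HasSubgaussianMGF (fun S : Fin m → α => Y (S i) - μ.real U)
      ((‖(1 : ℝ) - 0‖₊ / 2) ^ 2) (Measure.pi fun _ => μ) := by
    intro i
    have hmean : ∫ S, Y (S i) ∂(Measure.pi fun _ : Fin m => μ) = μ.real U := by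
      rw [integral_comp_eval hY.aestronglyMeasurable, integral_indicator_one hU]
    have := hasSubgaussianMGF_of_mem_Icc (μ := Measure.pi fun _ : Fin m => μ) (a := 0) (b := 1)
      (X := fun S => Y (S i)) (hY.comp (measurable_pi_apply i)).aemeasurable
      (ae_of_all _ fun S => ?_)
    · rwa [hmean] at this
    · by_cases h : S i ∈ U <;> simp [Y, h]
  have hm : (0 : ℝ) < m := Nat.cast_pos.2 (NeZero.pos m)
  have hset : {S : Fin m → α | μ.real U + t ≤ (empiricalMeasure S).real U} =
      {S | m * t ≤ ∑ i, (Y (S i) - μ.real U)} := by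
    ext S
    simp only [Set.mem_ofPred_eq, measureReal_empiricalMeasure S hU, Finset.sum_sub_distrib,
      Finset.sum_const, Finset.card_univ, Fintype.card_fin, nsmul_eq_mul, le_div_iff₀ hm]
    constructor <;> intro h <;> linarith
  rw [hset]
  refine (HasSubgaussianMGF.measure_sum_ge_le_of_iIndepFun hindep (s := Finset.univ)
    (fun i _ => hsubG i) (by positivity)).trans_eq ?_
  congr 1
  simp only [sub_zero, nnnorm_one, one_div, inv_pow, Finset.sum_const, Finset.card_univ,
    Fintype.card_fin, nsmul_eq_mul, NNReal.coe_mul, NNReal.coe_natCast, NNReal.coe_inv,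
    NNReal.coe_pow, NNReal.coe_ofNat, neg_mul]
  field_simp

end Empirical

theorem sum_abs_sub_le_two_mul_of_forall_sum_sub_le {ι : Type*} [Fintype ι] {a b : ι → ℝ}
    (hab : ∑ j, a j = ∑ j, b j) {r : ℝ} (h : ∀ T : Finset ι, ∑ j ∈ T, (a j - b j) ≤ r) :
    ∑ j, |a j - b j| ≤ 2 * r := by
  have habs : ∀ x : ℝ, |x| = 2 * (if 0 ≤ x then x else 0) - x := fun x => by
    split_ifs with hx
    · rw [abs_of_nonneg hx]; ring
    · rw [abs_of_neg (not_le.1 hx)]; ring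
  calc ∑ j, |a j - b j|
      = 2 * ∑ j ∈ Finset.univ.filter (fun j => 0 ≤ a j - b j), (a j - b j) -
          ∑ j, (a j - b j) := by
        simp only [Finset.sum_filter, Finset.mul_sum, ← Finset.sum_sub_distrib, habs]
    _ ≤ 2 * r := by
        have hzero : ∑ j, (a j - b j) = 0 := by rw [Finset.sum_sub_distrib, hab, sub_self]
        linarith [h (Finset.univ.filter fun j => 0 ≤ a j - b j)]

theorem pi_setOf_exists_notMem_eq_zero {α : Type*} [MeasurableSpace α] (μ : Measure α)
    [IsProbabilityMeasure μ] {m : ℕ} {W : Set α} (hW : MeasurableSet W) (hμW : μ W = 1) :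
    Measure.pi (fun _ : Fin m => μ) {S | ∃ i, S i ∉ W} = 0 := by
  have hae : ∀ᵐ s ∂μ, s ∈ W := by
    rw [ae_iff, ← Set.compl_def, prob_compl_eq_zero_iff hW]
    exact hμW
  simpa [ae_iff] using ae_all_iff.2 fun i => Measure.tendsto_eval_ae_ae (i := i) hae

section BretagnolleHuberCarol

variable {α : Type*} [MeasurableSpace α] (μ : Measure α) [IsProbabilityMeasure μ] {m : ℕ}
  [NeZero m] {ι : Type*} [Fintype ι] {U : ι → Set α}

theorem sum_abs_empiricalMeasure_sub_le_of_forall_lt (hU : ∀ j, MeasurableSet (U j))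
    (hdisj : Pairwise (Disjoint on U)) (hμU : μ (⋃ j, U j) = 1) {S : Fin m → α}
    (hS : ∀ i, S i ∈ ⋃ j, U j) {ε : ℝ}
    (hdev : ∀ T : Finset ι,
      (empiricalMeasure S).real (⋃ j ∈ T, U j) < μ.real (⋃ j ∈ T, U j) + ε / 2) :
    ∑ j, |μ.real (U j) - (empiricalMeasure S).real (U j)| ≤ ε := by
  have hsum : ∀ ν : Measure α, IsProbabilityMeasure ν → ν (⋃ j, U j) = 1 →
      ∑ j, ν.real (U j) = 1 := fun ν _ hν => by
    rw [← measureReal_iUnion_fintype hdisj hU, measureReal_def, hν, ENNReal.toReal_one]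
  have hemp := empiricalMeasure_eq_one (MeasurableSet.iUnion hU) hS
  have := sum_abs_sub_le_two_mul_of_forall_sum_sub_le
    ((hsum _ inferInstance hemp).trans (hsum μ inferInstance hμU).symm) (r := ε / 2) fun T => by
    rw [Finset.sum_sub_distrib, ← measureReal_biUnion_finset (fun i _ j _ hij => hdisj hij)
      (fun j _ => hU j), ← measureReal_biUnion_finset (fun i _ j _ hij => hdisj hij)
      (fun j _ => hU j)]
    linarith [hdev T]
  simpa only [abs_sub_comm, two_mul, add_halves] using this

theorem ofReal_le_pi_sum_abs_empiricalMeasure_sub_le (hU : ∀ j, MeasurableSet (U j))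
    (hdisj : Pairwise (Disjoint on U)) (hμU : μ (⋃ j, U j) = 1) {ε : ℝ} (hε : 0 ≤ ε) :
    ENNReal.ofReal (1 - 2 ^ Fintype.card ι * Real.exp (-m * ε ^ 2 / 2)) ≤
      Measure.pi (fun _ : Fin m => μ) {S | (∀ i, S i ∈ ⋃ j, U j) ∧
        ∑ j, |μ.real (U j) - (empiricalMeasure S).real (U j)| ≤ ε} := by
  set ν := Measure.pi fun _ : Fin m => μ
  set bad : Finset ι → Set (Fin m → α) := fun T =>
    {S | μ.real (⋃ j ∈ T, U j) + ε / 2 ≤ (empiricalMeasure S).real (⋃ j ∈ T, U j)}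
  have hbad : ∀ T, ν (bad T) ≤ ENNReal.ofReal (Real.exp (-m * ε ^ 2 / 2)) := fun T => by
    rw [← ofReal_measureReal]
    refine ENNReal.ofReal_le_ofReal ((measureReal_empiricalMeasure_ge_le μ
      (Finset.measurableSet_biUnion T fun j _ => hU j) (by positivity)).trans_eq ?_)
    ring_nf
  have hall := pi_setOf_exists_notMem_eq_zero μ (m := m) (MeasurableSet.iUnion hU) hμU
  set good := {S : Fin m → α | (∀ i, S i ∈ ⋃ j, U j) ∧
    ∑ j, |μ.real (U j) - (empiricalMeasure S).real (U j)| ≤ ε}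
  have hcompl : goodᶜ ⊆ {S | ∃ i, S i ∉ ⋃ j, U j} ∪ ⋃ T, bad T := by
    intro S hS
    rw [Set.mem_union, or_iff_not_imp_left]
    intro hin
    simp only [Set.mem_ofPred_eq, not_exists, not_not] at hin
    by_contra hbad'
    simp only [Set.mem_iUnion, not_exists, bad, Set.mem_ofPred_eq, not_le] at hbad'
    exact hS ⟨hin, sum_abs_empiricalMeasure_sub_le_of_forall_lt μ hU hdisj hμU hin hbad'⟩
  have hcompl_le : ν goodᶜ ≤ ENNReal.ofReal (2 ^ Fintype.card ι * Real.exp (-m * ε ^ 2 / 2)) :=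
    calc ν goodᶜ ≤ ν {S | ∃ i, S i ∉ ⋃ j, U j} + ν (⋃ T, bad T) :=
          (measure_mono hcompl).trans (measure_union_le _ _)
      _ ≤ 0 + ∑ T, ENNReal.ofReal (Real.exp (-m * ε ^ 2 / 2)) :=
          add_le_add hall.le ((measure_iUnion_fintype_le ν bad).trans
            (Finset.sum_le_sum fun T _ => hbad T))
      _ = _ := by
          rw [zero_add, Finset.sum_const, Finset.card_univ, Fintype.card_finset, nsmul_eq_mul,
            ENNReal.ofReal_mul (by positivity), ENNReal.ofReal_pow zero_le_two,
            ENNReal.ofReal_ofNat]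
          norm_cast
  have hone : 1 ≤ ν good + ν goodᶜ := by simpa using measure_univ_le_add_compl (μ := ν) good
  rw [ENNReal.ofReal_sub _ (by positivity), ENNReal.ofReal_one, tsub_le_iff_right]
  exact hone.trans (add_le_add_right hcompl_le _)

end BretagnolleHuberCarol

section Robustness

variable {α E : Type*} [MeasurableSpace α] [NormedAddCommGroup E] [NormedSpace ℝ E]
  {l : α → E} {M Δ : ℝ}

theorem norm_setIntegral_sub_setIntegral_le [CompleteSpace E] (μ ν : Measure α)
    [IsFiniteMeasure μ] [IsFiniteMeasure ν] {U : Set α} (hU : MeasurableSet U)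
    (hl : AEStronglyMeasurable l μ) (hl' : AEStronglyMeasurable l ν) (hM : ∀ s ∈ U, ‖l s‖ ≤ M)
    (hΔ : ∀ s ∈ U, ∀ s' ∈ U, ‖l s - l s'‖ ≤ Δ) :
    ‖∫ s in U, l s ∂μ - ∫ s in U, l s ∂ν‖ ≤ Δ * μ.real U + M * |μ.real U - ν.real U| := by
  rcases U.eq_empty_or_nonempty with rfl | ⟨s₀, hs₀⟩
  · simp
  have hΔ0 : 0 ≤ Δ := (norm_nonneg _).trans (hΔ s₀ hs₀ s₀ hs₀)
  have hlν : IntegrableOn l U ν := Measure.integrableOn_of_bounded (measure_ne_top _ _) hl'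
    (ae_restrict_of_forall_mem hU hM)
  rcases (measureReal_nonneg (μ := ν) (s := U)).eq_or_lt with hν0 | hνpos
  · have hν : ∫ s in U, l s ∂ν = 0 := by
      rw [Measure.restrict_eq_zero.2 ((measureReal_eq_zero_iff (measure_ne_top ν U)).1 hν0.symm),
        integral_zero_measure]
    rw [hν, sub_zero, ← hν0, sub_zero, abs_of_nonneg measureReal_nonneg]
    linarith [norm_setIntegral_le_of_norm_le_const (measure_lt_top μ U) hM,
      mul_nonneg hΔ0 (measureReal_nonneg (μ := μ) (s := U))]
  -- `v` is the `ν`-average of `l` over `U`, which lies within `Δ` of every value of `l` on `U`.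
  set v : E := (ν.real U)⁻¹ • ∫ s in U, l s ∂ν
  have hν : ∫ s in U, l s ∂ν = ν.real U • v := by
    rw [smul_inv_smul₀ hνpos.ne']
  have hv_near : ∀ s ∈ U, ‖l s - v‖ ≤ Δ := fun s hs => by
    have : l s - v = (ν.real U)⁻¹ • ∫ s' in U, (l s - l s') ∂ν := by
      rw [integral_sub (integrable_const (l s)) hlν, setIntegral_const, smul_sub,
        inv_smul_smul₀ hνpos.ne']
    rw [this, norm_smul, norm_inv, Real.norm_of_nonneg hνpos.le, inv_mul_le_iff₀ hνpos, mul_comm]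
    exact norm_setIntegral_le_of_norm_le_const (measure_lt_top ν U) (hΔ s hs)
  have hv_le : ‖v‖ ≤ M := by
    rw [norm_smul, norm_inv, Real.norm_of_nonneg hνpos.le, inv_mul_le_iff₀ hνpos, mul_comm]
    exact norm_setIntegral_le_of_norm_le_const (measure_lt_top ν U) hM
  have hsplit : ∫ s in U, l s ∂μ - ∫ s in U, l s ∂ν =
      ∫ s in U, (l s - v) ∂μ + (μ.real U - ν.real U) • v := by
    rw [integral_sub (Measure.integrableOn_of_bounded (measure_ne_top _ _) hl
      (ae_restrict_of_forall_mem hU hM)) (integrable_const v),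
      setIntegral_const, hν, sub_smul]
    abel
  rw [hsplit]
  refine (norm_add_le _ _).trans (add_le_add ?_ ?_)
  · exact norm_setIntegral_le_of_norm_le_const (measure_lt_top μ U) hv_near
  · rw [norm_smul, Real.norm_eq_abs, mul_comm]
    exact mul_le_mul_of_nonneg_right hv_le (abs_nonneg _)

theorem integral_eq_sum_setIntegral_of_partition (μ : Measure α) [IsFiniteMeasure μ] {ι : Type*}
    [Fintype ι] {U : ι → Set α} (hU : ∀ j, MeasurableSet (U j)) (hdisj : Pairwise (Disjoint on U))
    (hμU : μ (⋃ j, U j)ᶜ = 0) (hl : AEStronglyMeasurable l μ) (hM : ∀ j, ∀ s ∈ U j, ‖l s‖ ≤ M) :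
    ∫ s, l s ∂μ = ∑ j, ∫ s in U j, l s ∂μ := by
  rw [← integral_iUnion_fintype hU hdisj fun j => Measure.integrableOn_of_bounded
    (measure_ne_top _ _) hl (ae_restrict_of_forall_mem (hU j) (hM j)),
    Measure.restrict_eq_self_of_ae_mem
      (measure_eq_zero_iff_ae_notMem.1 hμU |>.mono fun _ => not_not.1)]

theorem norm_integral_sub_integral_le_of_partition [CompleteSpace E] (μ ν : Measure α)
    [IsProbabilityMeasure μ] [IsProbabilityMeasure ν] {ι : Type*} [Fintype ι] {U : ι → Set α}
    (hU : ∀ j, MeasurableSet (U j)) (hdisj : Pairwise (Disjoint on U))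
    (hμU : μ (⋃ j, U j) = 1) (hνU : ν (⋃ j, U j) = 1) (hl : AEStronglyMeasurable l μ)
    (hl' : AEStronglyMeasurable l ν) (hM : ∀ j, ∀ s ∈ U j, ‖l s‖ ≤ M)
    (hΔ : ∀ j, ∀ s ∈ U j, ∀ s' ∈ U j, ‖l s - l s'‖ ≤ Δ) :
    ‖∫ s, l s ∂μ - ∫ s, l s ∂ν‖ ≤ Δ + M * ∑ j, |μ.real (U j) - ν.real (U j)| := by
  have hW : MeasurableSet (⋃ j, U j) := MeasurableSet.iUnion hU
  rw [integral_eq_sum_setIntegral_of_partition μ hU hdisj ((prob_compl_eq_zero_iff hW).2 hμU) hl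
    hM, integral_eq_sum_setIntegral_of_partition ν hU hdisj ((prob_compl_eq_zero_iff hW).2 hνU)
    hl' hM, ← Finset.sum_sub_distrib]
  calc ‖∑ j, (∫ s in U j, l s ∂μ - ∫ s in U j, l s ∂ν)‖
      ≤ ∑ j, (Δ * μ.real (U j) + M * |μ.real (U j) - ν.real (U j)|) :=
        (norm_sum_le _ _).trans (Finset.sum_le_sum fun j _ =>
          norm_setIntegral_sub_setIntegral_le μ ν (hU j) hl hl' (hM j) (hΔ j))
    _ = Δ + M * ∑ j, |μ.real (U j) - ν.real (U j)| := by
        rw [Finset.sum_add_distrib, ← Finset.mul_sum, ← Finset.mul_sum,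
          ← measureReal_iUnion_fintype hdisj hU, measureReal_def, hμU, ENNReal.toReal_one, mul_one]

end Robustness

theorem two_pow_mul_exp_neg_mul_sqrt_sq_div_two (N : ℕ) {m ζ : ℝ} (hm : 0 < m) (hζ : 0 < ζ)
    (hζ1 : ζ ≤ 1) :
    2 ^ N * Real.exp (-m * Real.sqrt ((2 * N * Real.log 2 + 2 * Real.log (1 / ζ)) / m) ^ 2 / 2) =
      ζ := by
  have hlog : 0 ≤ Real.log (1 / ζ) := Real.log_nonneg (by rw [le_div_iff₀ hζ]; linarith)
  have hexp : -m * ((2 * N * Real.log 2 + 2 * Real.log (1 / ζ)) / m) / 2 =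
      Real.log ζ - N * Real.log 2 := by
    rw [one_div, Real.log_inv]
    field_simp
    ring
  rw [Real.sq_sqrt (by positivity), hexp, Real.exp_sub, Real.exp_log hζ, Real.exp_nat_mul,
    Real.exp_log two_pos]
  field_simp

theorem generalization_error_bound_general {p q : ℕ}
    (X : Set (EuclideanSpace ℝ (Fin p))) (Y : Set (EuclideanSpace ℝ (Fin q)))
    (hX : IsCompact X) (hY : IsCompact Y)
    (A : EuclideanSpace ℝ (Fin p) →L[ℝ] EuclideanSpace ℝ (Fin q))
    (η : ℝ)
    (D : Set (EuclideanSpace ℝ (Fin p) × EuclideanSpace ℝ (Fin q)))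
    (hD : D = {s | ∃ x ∈ X, ∃ n : EuclideanSpace ℝ (Fin q),
        ‖n‖ ≤ η ∧ A x + n ∈ Y ∧ s = (x, A x + n)})
    (μ : Measure (EuclideanSpace ℝ (Fin p) × EuclideanSpace ℝ (Fin q)))
    [IsProbabilityMeasure μ] (hμD : μ D = 1)
    (m : ℕ) (hm : 0 < m)
    (F : ((Fin m → EuclideanSpace ℝ (Fin p) × EuclideanSpace ℝ (Fin q))) →
      (EuclideanSpace ℝ (Fin q) → EuclideanSpace ℝ (Fin p)))
    (hF : ∀ S, ContDiff ℝ 1 (F S))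
    (Λ₁ Λ₂ M : ℝ)
    (hΛ₁ : ∀ S, ∀ y ∈ convexHull ℝ Y, ‖(fderiv ℝ (F S) y).comp A‖ ≤ Λ₁)
    (hΛ₂ : ∀ S, ∀ y ∈ convexHull ℝ Y, ‖fderiv ℝ (F S) y‖ ≤ Λ₂)
    (hM : ∀ S, ∀ s ∈ D, ‖F S s.2 - s.1‖ ≤ M)
    (δ : ℝ)
    (N : ℕ) (C : Finset (EuclideanSpace ℝ (Fin p))) (hC : C.card = N)
    (hcover : ∀ x ∈ X, ∃ c ∈ C, ‖x - c‖ ≤ δ / 2)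
    (ζ : ℝ) (hζ : 0 < ζ) :
    ENNReal.ofReal (1 - ζ) ≤
      (Measure.pi fun _ : Fin m => μ)
        {S | |(∫ s, ‖F S s.2 - s.1‖ ∂μ) -
              (1 / (m : ℝ)) * ∑ i : Fin m, ‖F S (S i).2 - (S i).1‖| ≤
            (1 + Λ₁) * δ + 2 * η * Λ₂ +
              M * Real.sqrt ((2 * (N : ℝ) * Real.log 2 + 2 * Real.log (1 / ζ)) / m)} := by
  rcases le_or_gt 1 ζ with hζ1 | hζ1
  · rw [ENNReal.ofReal_of_nonpos (by linarith)]
    exact zero_le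
  have : NeZero m := ⟨hm.ne'⟩
  subst hD
  obtain ⟨U, hU, hdisj, hUD, hdiam⟩ := exists_partition_measurementSet hX hY A η hcover
  have hBHC := ofReal_le_pi_sum_abs_empiricalMeasure_sub_le μ (m := m) hU hdisj (hUD ▸ hμD)
    (Real.sqrt_nonneg ((2 * (N : ℝ) * Real.log 2 + 2 * Real.log (1 / ζ)) / m))
  rw [Fintype.card_coe, hC, two_pow_mul_exp_neg_mul_sqrt_sq_div_two N (Nat.cast_pos.2 hm) hζ
    hζ1.le] at hBHC
  refine hBHC.trans (measure_mono fun S ⟨hSD, hdev⟩ => ?_)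
  have hl : Continuous fun s : _ × _ => ‖F S s.2 - s.1‖ := by
    have := (hF S).continuous
    fun_prop
  have hUD' : ∀ c s, s ∈ U c → s ∈ measurementSet X Y A η := fun c s hs =>
    hUD ▸ Set.mem_iUnion_of_mem c hs
  have hrob := norm_integral_sub_integral_le_of_partition μ (empiricalMeasure S) hU hdisj
    (hUD ▸ hμD) (empiricalMeasure_eq_one (MeasurableSet.iUnion hU) hSD) hl.aestronglyMeasurable
    hl.aestronglyMeasurable (fun c s hs => by simpa using hM S s (hUD' c s hs))
    fun c s hs s' hs' => by
      rw [Real.norm_eq_abs]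
      exact abs_norm_sub_sub_norm_sub_le_of_mem_measurementSet ((hF S).differentiable one_ne_zero)
        (hΛ₁ S) (hΛ₂ S) (hUD' c s' hs') (hUD' c s hs) (hdiam c s hs s' hs')
  have hM0 : 0 ≤ M := (norm_nonneg _).trans (hM S _ (hUD ▸ hSD 0))
  rw [integral_empiricalMeasure, Real.norm_eq_abs, smul_eq_mul, ← one_div] at hrob
  exact hrob.trans (add_le_add_right (mul_le_mul_of_nonneg_left hdev hM0) _)

/-- generalization error bound: for a learning algorithm `F` producing, from `m`
i.i.d. samples drawn from a probability measure `μ` concentrated on the sample space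
`D = {(x, A x + n) : x ∈ X, ‖n‖ ≤ η, A x + n ∈ Y}`, continuously differentiable hypotheses
with uniformly bounded Jacobian norms (`Λ₁`, `Λ₂`) and uniformly bounded loss (`M`), if `X`
admits a finite `(δ/2)`-cover of cardinality `N`, then with probability at least `1 − ζ` over
the draw of the training set, the generalization error of the learnt hypothesis is at most
`(1 + Λ₁) δ + 2 η Λ₂ + M √((2 N log 2 + 2 log(1/ζ))/m)`. -/
theorem generalization_error_bound {p q : ℕ}
    (X : Set (EuclideanSpace ℝ (Fin p))) (Y : Set (EuclideanSpace ℝ (Fin q)))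
    (hX : IsCompact X) (hY : IsCompact Y)
    (A : EuclideanSpace ℝ (Fin p) →L[ℝ] EuclideanSpace ℝ (Fin q))
    (η : ℝ) (hη : 0 ≤ η)
    (D : Set (EuclideanSpace ℝ (Fin p) × EuclideanSpace ℝ (Fin q)))
    (hD : D = {s | ∃ x ∈ X, ∃ n : EuclideanSpace ℝ (Fin q),
        ‖n‖ ≤ η ∧ A x + n ∈ Y ∧ s = (x, A x + n)})
    (μ : Measure (EuclideanSpace ℝ (Fin p) × EuclideanSpace ℝ (Fin q)))
    [IsProbabilityMeasure μ] (hμD : μ D = 1)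
    (m : ℕ) (hm : 0 < m)
    (F : ((Fin m → EuclideanSpace ℝ (Fin p) × EuclideanSpace ℝ (Fin q))) →
      (EuclideanSpace ℝ (Fin q) → EuclideanSpace ℝ (Fin p)))
    (hF : ∀ S, ContDiff ℝ 1 (F S))
    (Λ₁ Λ₂ M : ℝ)
    (hΛ₁ : ∀ S, ∀ y ∈ convexHull ℝ Y, ‖(fderiv ℝ (F S) y).comp A‖ ≤ Λ₁)
    (hΛ₂ : ∀ S, ∀ y ∈ convexHull ℝ Y, ‖fderiv ℝ (F S) y‖ ≤ Λ₂)
    (hM : ∀ S, ∀ s ∈ D, ‖F S s.2 - s.1‖ ≤ M)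
    (hmeas₁ : Measurable fun S => ∫ s, ‖F S s.2 - s.1‖ ∂μ)
    (hmeas₂ : Measurable fun pr :
        ((Fin m → EuclideanSpace ℝ (Fin p) × EuclideanSpace ℝ (Fin q)) ×
          (EuclideanSpace ℝ (Fin p) × EuclideanSpace ℝ (Fin q))) =>
        ‖F pr.1 pr.2.2 - pr.2.1‖)
    (δ : ℝ) (hδ : 0 < δ)
    (N : ℕ) (C : Finset (EuclideanSpace ℝ (Fin p))) (hC : C.card = N)
    (hcover : ∀ x ∈ X, ∃ c ∈ C, ‖x - c‖ ≤ δ / 2)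
    (ζ : ℝ) (hζ : 0 < ζ) :
    ENNReal.ofReal (1 - ζ) ≤
      (Measure.pi fun _ : Fin m => μ)
        {S | |(∫ s, ‖F S s.2 - s.1‖ ∂μ) -
              (1 / (m : ℝ)) * ∑ i : Fin m, ‖F S (S i).2 - (S i).1‖| ≤
            (1 + Λ₁) * δ + 2 * η * Λ₂ +
              M * Real.sqrt ((2 * (N : ℝ) * Real.log 2 + 2 * Real.log (1 / ζ)) / m)} :=
  generalization_error_bound_general X Y hX hY A η D hD μ hμD m hm F hF Λ₁ Λ₂ M hΛ₁ hΛ₂ hM δ N C hC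
    hcover ζ hζ
end
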